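/- Suppose γ is a line and suppose there exist ε > 0 and C¹ curves c₁, c₂ : [t₀−ε, t₀+ε] → M with c₁(t₀−ε) = ξ(t₀−ε), c₁(t₀+ε) = η(t₀+ε), c₂(t₀−ε) = η(t₀−ε), c₂(t₀+ε) = ξ(t₀+ε), and L(c₁) + L(c₂) < 4ε, where ξ, η are lines with B_γ ∘ ξ ≡ 0, B_γ ∘ η ≡ 0, and all forward/backward subrays of ξ, η are corays to γ⁺, γ⁻ respectively (i.e., b_{γ⁺} and b_{γ⁻} are calibrated along them). Then B_γ(c₁(t₀)) + B_γ(c₂(t₀)) < 0, contradicting B_γ ≥ 0. Hence no such shortening curves exist. -/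

import Mathlib

/-!
Busemann functions are 1-Lipschitz, so `B_γ(cᵢ t₀)` exceeds `b_{γ⁺}` at the right endpoint of `cᵢ`
plus `b_{γ⁻}` at its left endpoint by at most the length of `cᵢ`. The endpoints swap between `ξ` and
`η`, and calibration moves each of the four endpoint values by `-ε` relative to `t₀`, so these
endpoint values add up to `B_γ(ξ t₀) + B_γ(η t₀) - 4ε = -4ε`, which the total length `< 4ε`
cannot make up.
-/

open Filter Topology Set

theorem lipschitzWith_one_of_tendsto_dist_sub {M : Type*} [PseudoMetricSpace M] {b : M → ℝ}
    (g : ℝ → M) (hb : ∀ x, Tendsto (fun t => dist x (g t) - t) atTop (𝓝 (b x))) :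
    LipschitzWith 1 b := by
  refine LipschitzWith.of_le_add fun x y => sub_le_iff_le_add'.mp ?_
  refine le_of_tendsto ((hb x).sub (hb y)) (Eventually.of_forall fun t => ?_)
  linarith [(abs_le.mp (abs_dist_sub_le x y (g t))).2]

section Variation

variable {M : Type*} [PseudoMetricSpace M] (f : ℝ → M) {a b c : ℝ}

theorem ofReal_dist_add_dist_le_eVariationOn (hab : a ≤ b) (hbc : b ≤ c) :
    ENNReal.ofReal (dist (f a) (f b) + dist (f b) (f c)) ≤ eVariationOn f (Icc a c) := by
  have hsplit := eVariationOn.Icc_add_Icc f (s := univ) hab hbc (mem_univ b)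
  simp only [univ_inter] at hsplit
  rw [ENNReal.ofReal_add dist_nonneg dist_nonneg, ← edist_dist, ← edist_dist, ← hsplit]
  gcongr
  · exact eVariationOn.edist_le f (left_mem_Icc.mpr hab) (right_mem_Icc.mpr hab)
  · exact eVariationOn.edist_le f (left_mem_Icc.mpr hbc) (right_mem_Icc.mpr hbc)

theorem ofReal_add_sub_le_eVariationOn {bp bm : M → ℝ} (hp : LipschitzWith 1 bp)
    (hm : LipschitzWith 1 bm) (hab : a ≤ b) (hbc : b ≤ c) :
    ENNReal.ofReal (bp (f b) + bm (f b) - (bp (f c) + bm (f a))) ≤ eVariationOn f (Icc a c) := by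
  refine le_trans (ENNReal.ofReal_le_ofReal ?_) (ofReal_dist_add_dist_le_eVariationOn f hab hbc)
  have hpc := hp.le_add_mul (f b) (f c)
  have hma := hm.le_add_mul (f b) (f a)
  rw [dist_comm (f b) (f a)] at hma
  push_cast at hpc hma
  linarith

end Variation

def IsLine {M : Type*} [MetricSpace M] (γ : ℝ → M) : Prop :=
  ∀ t₁ t₂ : ℝ, dist (γ t₁) (γ t₂) = |t₂ - t₁|

theorem shortening_contradiction_general {M : Type*} [MetricSpace M]
    (γ ξ η : ℝ → M)
    (bp bm : M → ℝ)
    (hbp : ∀ x, Filter.Tendsto (fun t => dist x (γ t) - t) Filter.atTop (nhds (bp x)))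
    (hbm : ∀ x, Filter.Tendsto (fun t => dist x (γ (-t)) - t) Filter.atTop (nhds (bm x)))
    (hξp : ∀ t₁ t₂ : ℝ, bp (ξ t₁) - bp (ξ t₂) = t₂ - t₁)
    (hξm : ∀ t₁ t₂ : ℝ, bm (ξ t₁) - bm (ξ t₂) = t₁ - t₂)
    (hξ0 : ∀ t : ℝ, bp (ξ t) + bm (ξ t) = 0)
    (hηp : ∀ t₁ t₂ : ℝ, bp (η t₁) - bp (η t₂) = t₂ - t₁)
    (hηm : ∀ t₁ t₂ : ℝ, bm (η t₁) - bm (η t₂) = t₁ - t₂)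
    (hη0 : ∀ t : ℝ, bp (η t) + bm (η t) = 0)
    (t₀ ε : ℝ) (hε : 0 < ε) (c₁ c₂ : ℝ → M)
    (hc₁l : c₁ (t₀ - ε) = ξ (t₀ - ε)) (hc₁r : c₁ (t₀ + ε) = η (t₀ + ε))
    (hc₂l : c₂ (t₀ - ε) = η (t₀ - ε)) (hc₂r : c₂ (t₀ + ε) = ξ (t₀ + ε))
    (hlen : eVariationOn c₁ (Set.Icc (t₀ - ε) (t₀ + ε)) +
        eVariationOn c₂ (Set.Icc (t₀ - ε) (t₀ + ε)) < ENNReal.ofReal (4 * ε)) :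
    (bp (c₁ t₀) + bm (c₁ t₀)) + (bp (c₂ t₀) + bm (c₂ t₀)) < 0 := by
  have hp := lipschitzWith_one_of_tendsto_dist_sub γ hbp
  have hm := lipschitzWith_one_of_tendsto_dist_sub (fun t => γ (-t)) hbm
  have hl : t₀ - ε ≤ t₀ := by linarith
  have hr : t₀ ≤ t₀ + ε := by linarith
  have h₁ := ofReal_add_sub_le_eVariationOn c₁ hp hm hl hr
  have h₂ := ofReal_add_sub_le_eVariationOn c₂ hp hm hl hr
  rw [hc₁l, hc₁r] at h₁
  rw [hc₂l, hc₂r] at h₂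
  have hexcess : bp (c₁ t₀) + bm (c₁ t₀) - (bp (η (t₀ + ε)) + bm (ξ (t₀ - ε))) +
      (bp (c₂ t₀) + bm (c₂ t₀) - (bp (ξ (t₀ + ε)) + bm (η (t₀ - ε)))) < 4 * ε := by
    rw [← ENNReal.ofReal_lt_ofReal_iff (by positivity)]
    exact ENNReal.ofReal_add_le.trans_lt ((add_le_add h₁ h₂).trans_lt hlen)
  linarith [hηp (t₀ + ε) t₀, hξm (t₀ - ε) t₀, hξp (t₀ + ε) t₀, hηm (t₀ - ε) t₀, hξ0 t₀, hη0 t₀]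

/-- Mather-type shortening contradiction.  Let `γ, ξ, η` be lines, with `ξ, η`
calibrated by `b_{γ⁺}` and `b_{γ⁻}` (so in particular `B_γ ∘ ξ ≡ 0` and
`B_γ ∘ η ≡ 0`).  If `c₁, c₂ : [t₀-ε, t₀+ε] → M` are curves with
`c₁(t₀-ε) = ξ(t₀-ε)`, `c₁(t₀+ε) = η(t₀+ε)`, `c₂(t₀-ε) = η(t₀-ε)`,
`c₂(t₀+ε) = ξ(t₀+ε)` and total length `L(c₁) + L(c₂) < 4ε` (length measured by
the variation `eVariationOn`), then `B_γ(c₁ t₀) + B_γ(c₂ t₀) < 0`,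
contradicting `B_γ ≥ 0`; hence no such shortening curves exist. -/
theorem shortening_contradiction {M : Type*} [MetricSpace M] [CompleteSpace M]
    (γ ξ η : ℝ → M) (hγ : IsLine γ) (hξ : IsLine ξ) (hη : IsLine η)
    (bp bm : M → ℝ)
    (hbp : ∀ x, Filter.Tendsto (fun t => dist x (γ t) - t) Filter.atTop (nhds (bp x)))
    (hbm : ∀ x, Filter.Tendsto (fun t => dist x (γ (-t)) - t) Filter.atTop (nhds (bm x)))
    (hξp : ∀ t₁ t₂ : ℝ, bp (ξ t₁) - bp (ξ t₂) = t₂ - t₁)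
    (hξm : ∀ t₁ t₂ : ℝ, bm (ξ t₁) - bm (ξ t₂) = t₁ - t₂)
    (hξ0 : ∀ t : ℝ, bp (ξ t) + bm (ξ t) = 0)
    (hηp : ∀ t₁ t₂ : ℝ, bp (η t₁) - bp (η t₂) = t₂ - t₁)
    (hηm : ∀ t₁ t₂ : ℝ, bm (η t₁) - bm (η t₂) = t₁ - t₂)
    (hη0 : ∀ t : ℝ, bp (η t) + bm (η t) = 0)
    (t₀ ε : ℝ) (hε : 0 < ε) (c₁ c₂ : ℝ → M)
    (hc₁l : c₁ (t₀ - ε) = ξ (t₀ - ε)) (hc₁r : c₁ (t₀ + ε) = η (t₀ + ε))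
    (hc₂l : c₂ (t₀ - ε) = η (t₀ - ε)) (hc₂r : c₂ (t₀ + ε) = ξ (t₀ + ε))
    (hlen : eVariationOn c₁ (Set.Icc (t₀ - ε) (t₀ + ε)) +
        eVariationOn c₂ (Set.Icc (t₀ - ε) (t₀ + ε)) < ENNReal.ofReal (4 * ε)) :
    (bp (c₁ t₀) + bm (c₁ t₀)) + (bp (c₂ t₀) + bm (c₂ t₀)) < 0 :=
  shortening_contradiction_general γ ξ η bp bm hbp hbm hξp hξm hξ0 hηp hηm hη0 t₀ ε hε c₁ c₂ hc₁l
    hc₁r hc₂l hc₂r hlen
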